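/- arXiv:1903.08566 — 7 statements merged into one kernel-verified Lean document; each statement's English description precedes it below -/
import Mathlib

section
/- For all real constants a₀ > 0, β > 0, and a₂ ∈ ℝ, the function (p, y) ↦ a₀·exp(a₂·y)/log(1 + β·exp(p)) is convex on ℝ² (jointly in the pair (p, y)). -/
/-!
Write the function as `a₀ · exp (a₂ y - log (L p))` with `L p = log (1 + β eᵖ)`. The exponential
of a convex function is convex, so it suffices that `log ∘ L` is concave. Since
`L' = β eᵖ / (1 + β eᵖ) = 1 - e^{-L}`, the derivative of `log ∘ L` is `g ∘ L` with
`g u = (1 - e^{-u}) / u`. Here `L` is increasing and positive, while `g` is decreasing, being minus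
the slope of the secant of the convex function `e^{-u}` through `u = 0`.
-/

open Real Set

theorem ConvexOn.exp {E : Type*} [AddCommGroup E] [Module ℝ E] {s : Set E} {f : E → ℝ}
    (hf : ConvexOn ℝ s f) : ConvexOn ℝ s fun x => exp (f x) :=
  ⟨hf.1, fun _ hx _ hy _ _ ha hb hab =>
    (exp_le_exp.2 (hf.2 hx hy ha hb hab)).trans (convexOn_exp.2 trivial trivial ha hb hab)⟩

theorem antitoneOn_one_sub_exp_neg_div : AntitoneOn (fun u : ℝ => (1 - exp (-u)) / u) {0}ᶜ := by
  intro x hx y hy hxy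
  have hsecant := (convexOn_exp.comp_linearMap (-LinearMap.id)).secant_mono (a := 0)
    trivial trivial trivial hx hy hxy
  simp only [Function.comp_apply, LinearMap.neg_apply, LinearMap.id_apply, neg_zero, exp_zero,
    sub_zero] at hsecant
  change (1 - exp (-y)) / y ≤ (1 - exp (-x)) / x
  rwa [← neg_sub (exp (-y)), ← neg_sub (exp (-x)), neg_div, neg_div, neg_le_neg_iff]

theorem hasDerivAt_log_one_add_mul_exp {β : ℝ} (hβ : 0 ≤ β) (p : ℝ) :
    HasDerivAt (fun p => log (1 + β * exp p)) (1 - exp (-log (1 + β * exp p))) p := by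
  have hpos : 0 < 1 + β * exp p := by positivity
  convert (((hasDerivAt_exp p).const_mul β).const_add 1).log hpos.ne' using 1
  rw [exp_neg, exp_log hpos]
  field_simp
  ring

theorem log_one_add_mul_exp_pos {β : ℝ} (hβ : 0 < β) (p : ℝ) : 0 < log (1 + β * exp p) :=
  log_pos (lt_add_of_pos_right 1 (by positivity))

theorem concaveOn_log_log_one_add_mul_exp {β : ℝ} (hβ : 0 < β) :
    ConcaveOn ℝ univ fun p => log (log (1 + β * exp p)) := by
  set L : ℝ → ℝ := fun p => log (1 + β * exp p)
  have hL_pos : ∀ p, 0 < L p := log_one_add_mul_exp_pos hβ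
  have hL_mono : Monotone L := fun p q hpq => log_le_log (by positivity) (by gcongr)
  have hderiv (p : ℝ) : HasDerivAt (fun p => log (L p)) ((1 - exp (-L p)) / L p) p :=
    (hasDerivAt_log_one_add_mul_exp hβ.le p).log (hL_pos p).ne'
  refine Antitone.concaveOn_univ_of_deriv (fun p => (hderiv p).differentiableAt) ?_
  intro p q hpq
  rw [(hderiv p).deriv, (hderiv q).deriv]
  exact antitoneOn_one_sub_exp_neg_div (hL_pos p).ne' (hL_pos q).ne' (hL_mono hpq)

/-- Joint convexity of `(p, y) ↦ a₀·e^{a₂ y} / log(1 + β e^{p})` on `ℝ²`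
(the case `a₁ = 0` in Proposition 2 of the paper). -/
theorem convexOn_exp_div_log_one_add_exp (a₀ β a₂ : ℝ) (ha₀ : 0 < a₀) (hβ : 0 < β) :
    ConvexOn ℝ (Set.univ : Set (ℝ × ℝ))
      (fun q : ℝ × ℝ => a₀ * Real.exp (a₂ * q.2) / Real.log (1 + β * Real.exp q.1)) := by
  have hexponent : ConvexOn ℝ univ fun q : ℝ × ℝ => a₂ * q.2 - log (log (1 + β * exp q.1)) :=
    ((a₂ • LinearMap.snd ℝ ℝ ℝ).convexOn convex_univ).sub
      ((concaveOn_log_log_one_add_mul_exp hβ).comp_linearMap (LinearMap.fst ℝ ℝ ℝ))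
  refine (hexponent.exp.smul ha₀.le).congr fun q _ => ?_
  dsimp only
  rw [smul_eq_mul, exp_sub, exp_log (log_one_add_mul_exp_pos hβ q.1), mul_div_assoc]
end

section
/- For every real u > 0, the inequality (1 + u)²·(log(1 + u))² − (3u + 2u²)·log(1 + u) + 2u² > 0 holds, where log denotes the natural logarithm. -/
/-- The inequality `Hₐ(u) > 0` from the proof of Proposition 2:
`(1+u)²·(log(1+u))² − (3u + 2u²)·log(1+u) + 2u² > 0` for all `u > 0`. -/
theorem Ha_pos (u : ℝ) (hu : 0 < u) :
    0 < (1 + u) ^ 2 * (Real.log (1 + u)) ^ 2 -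
      (3 * u + 2 * u ^ 2) * Real.log (1 + u) + 2 * u ^ 2 := by
  set L := Real.log (1 + u)
  have hL : L < u := by
    have := Real.log_lt_sub_one_of_pos (x := 1 + u) (by linarith) (by linarith)
    linarith
  have complete_square : (1 + u) ^ 2 * L ^ 2 - (3 * u + 2 * u ^ 2) * L + 2 * u ^ 2 =
      ((1 + u) * L - u) ^ 2 + u * (u - L) := by
    ring
  rw [complete_square]
  exact add_pos_of_nonneg_of_pos (sq_nonneg _) (mul_pos hu (sub_pos.mpr hL))
end

section
/- For every real u with 0 < u ≤ (√2 − 1)/2, the inequality 2·(1 + u)² < 3 + 2u − √(2 − (1 + 2u)²) holds. (Note that (1 + 2u)² ≤ 2 on this range, so the square root is real.) -/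
/-! With `s = 2u(1 + u)` one has `(1 + 2u)² = 1 + 2s` and `3 + 2u − 2(1 + u)² = 1 − s`, so the claim
reads `√(1 − 2s) < 1 − s`, which holds because `(1 − s)² = (1 − 2s) + s²` with `s ≠ 0`. The hypothesis
on `u` says `s ≤ 1/2`, which keeps `1 − s` positive. -/

theorem Real.sqrt_one_sub_two_mul_lt {s : ℝ} (hs : s ≠ 0) (hs1 : s < 1) :
    √(1 - 2 * s) < 1 - s := by
  rw [Real.sqrt_lt' (by linarith)]
  nlinarith [sq_pos_of_ne_zero hs]

theorem one_add_two_mul_sq_le_two {u : ℝ} (hu : 0 ≤ 1 + 2 * u) (hu2 : u ≤ (√2 - 1) / 2) :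
    (1 + 2 * u) ^ 2 ≤ 2 := by
  calc (1 + 2 * u) ^ 2 ≤ √2 ^ 2 := by gcongr; linarith
    _ = 2 := Real.sq_sqrt zero_le_two

/-- Auxiliary inequality from the proof of Proposition 2: for
`0 < u ≤ (√2 − 1)/2` one has `2(1 + u)² < 3 + 2u − √(2 − (1 + 2u)²)`. -/
theorem aux_root_inequality (u : ℝ) (hu : 0 < u)
    (hu2 : u ≤ (Real.sqrt 2 - 1) / 2) :
    2 * (1 + u) ^ 2 < 3 + 2 * u - Real.sqrt (2 - (1 + 2 * u) ^ 2) := by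
  have hsq := one_add_two_mul_sq_le_two (by linarith) hu2
  set s := 2 * u * (1 + u)
  have hs0 : 0 < s := by positivity
  have hs1 : s < 1 := by nlinarith
  have key := Real.sqrt_one_sub_two_mul_lt hs0.ne' hs1
  rw [show 2 - (1 + 2 * u) ^ 2 = 1 - 2 * s by ring]
  linarith
end

section
/- For every real constant β > 0, the function p ↦ log(log(1 + β·exp(p))) is concave on ℝ, where log denotes the natural logarithm. -/
/-!
With `v = 1 + β e^p`, the derivative of `p ↦ log (log v)` is `(v - 1) / (v log v)`, the reciprocal
of the slope of the secant of the convex function `x ↦ x log x` between `1` and `v`. That slope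
grows with `v`, and `v` grows with `p`, so the derivative is antitone.
-/

open Real Set

lemma antitoneOn_sub_one_div_mul_log :
    AntitoneOn (fun v : ℝ => (v - 1) / (v * log v)) (Ioi 1) := by
  intro a (ha : 1 < a) b (hb : 1 < b) hab
  have slope_mono := convexOn_mul_log.secant_mono (mem_Ici.2 zero_le_one)
    (mem_Ici.2 (by linarith)) (mem_Ici.2 (by linarith)) ha.ne' hb.ne' hab
  simp only [log_one, mul_zero, sub_zero] at slope_mono
  have slope_pos : 0 < a * log a / (a - 1) := div_pos (mul_log_pos ha) (sub_pos.2 ha)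
  simpa only [inv_div] using inv_anti₀ slope_pos slope_mono

lemma hasDerivAt_log_log {f : ℝ → ℝ} {f' x : ℝ} (hf : HasDerivAt f f' x) (hx : 1 < f x) :
    HasDerivAt (fun y => log (log (f y))) (f' / (f x * log (f x))) x := by
  have := (hf.log (by linarith)).log (log_pos hx).ne'
  rwa [div_div] at this

/-- Log-concavity of `p ↦ log(1 + β e^{p})`: the function
`p ↦ log(log(1 + β e^{p}))` is concave on `ℝ`. -/
theorem concaveOn_log_log_one_add_exp (β : ℝ) (hβ : 0 < β) :
    ConcaveOn ℝ (Set.univ : Set ℝ)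
      (fun p : ℝ => Real.log (Real.log (1 + β * Real.exp p))) := by
  set v : ℝ → ℝ := fun p => 1 + β * exp p
  have hv : ∀ p, 1 < v p := fun p => lt_add_of_pos_right 1 (by positivity)
  have hv_mono : Monotone v := fun a b hab => by
    simp only [v]
    gcongr
  have hderiv : ∀ p, HasDerivAt (fun p => log (log (v p))) ((v p - 1) / (v p * log (v p))) p :=
    fun p => by
      simpa [v] using hasDerivAt_log_log (((hasDerivAt_exp p).const_mul β).const_add 1) (hv p)
  refine Antitone.concaveOn_univ_of_deriv (fun p => (hderiv p).differentiableAt) fun a b hab => ?_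
  rw [(hderiv a).deriv, (hderiv b).deriv]
  exact antitoneOn_sub_one_div_mul_log (hv a) (hv b) (hv_mono hab)
end

section
/- Fix real parameters b > 0, ν > 0, γ₁ > 0, γ₃ > 0 and an exponent γ₂ ≤ 0. Then for every fixed d > 0, the function ω ↦ H₀(ω, d) = ω·d·(γ₁·ω^γ₂ + γ₃)/(ν·ω·d − b) is strictly decreasing on the interval { ω : ω > b/(ν·d) }, where ω^γ₂ denotes the real power. -/
/-! `H₀(ω, d) = d · (ω / (ν d ω - b)) · (γ₁ ω^γ₂ + γ₃)`. Since `b > 0`, the first factor is positive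
and strictly decreasing for `ω > b / (ν d)`; since `γ₂ ≤ 0`, the second is positive and
nonincreasing there. -/

open Set Real

lemma StrictAntiOn.mul_antitoneOn_of_nonneg_of_pos {α M₀ : Type*} [Preorder α] [Mul M₀] [Zero M₀]
    [Preorder M₀] [PosMulMono M₀] [MulPosStrictMono M₀] {f g : α → M₀} {s : Set α}
    (hf : StrictAntiOn f s) (hg : AntitoneOn g s) (hf₀ : ∀ x ∈ s, 0 ≤ f x)
    (hg₀ : ∀ x ∈ s, 0 < g x) : StrictAntiOn (f * g) s :=
  fun _ ha _ hb h ↦ (mul_le_mul_of_nonneg_left (hg ha hb h.le) (hf₀ _ hb)).trans_lt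
    (mul_lt_mul_of_pos_right (hf ha hb h) (hg₀ _ ha))

lemma strictAntiOn_div_mul_sub {b c : ℝ} (hb : 0 < b) (hc : 0 < c) :
    StrictAntiOn (fun x ↦ x / (c * x - b)) (Ioi (b / c)) := by
  intro x hx y hy hxy
  rw [mem_Ioi, div_lt_iff₀ hc] at hx hy
  rw [div_lt_div_iff₀ (by linarith) (by linarith)]
  nlinarith

lemma div_mul_sub_pos {b c x : ℝ} (hb : 0 < b) (hc : 0 < c) (hx : x ∈ Ioi (b / c)) :
    0 < x / (c * x - b) := by
  rw [mem_Ioi, div_lt_iff₀ hc] at hx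
  exact div_pos (by nlinarith) (by linarith)

lemma antitoneOn_mul_rpow_add_const {γ₁ γ₂ : ℝ} (hγ₁ : 0 ≤ γ₁) (hγ₂ : γ₂ ≤ 0) (γ₃ : ℝ) :
    AntitoneOn (fun x : ℝ ↦ γ₁ * x ^ γ₂ + γ₃) (Ioi 0) :=
  fun _ hx _ _ hxy ↦
    add_le_add_left (mul_le_mul_of_nonneg_left (rpow_le_rpow_of_nonpos hx hxy hγ₂) hγ₁) γ₃

/-- Case `γ₂ ≤ 0` of Proposition 4: for fixed `d > 0` the function
`ω ↦ H₀(ω, d) = ω·d·(γ₁·ω^γ₂ + γ₃)/(ν·ω·d − b)` is strictly decreasing on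
`{ω : ω > b/(ν·d)}`. -/
theorem H0_strictAntiOn_of_exponent_nonpos (b ν γ₁ γ₃ γ₂ : ℝ)
    (hb : 0 < b) (hν : 0 < ν) (hγ₁ : 0 < γ₁) (hγ₃ : 0 < γ₃) (hγ₂ : γ₂ ≤ 0)
    (d : ℝ) (hd : 0 < d) :
    StrictAntiOn (fun ω : ℝ => ω * d * (γ₁ * ω ^ γ₂ + γ₃) / (ν * ω * d - b))
      (Set.Ioi (b / (ν * d))) := by
  have hνd : 0 < ν * d := mul_pos hν hd
  have hpos : Ioi (b / (ν * d)) ⊆ Ioi 0 := Ioi_subset_Ioi (div_pos hb hνd).le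
  have hprod := (strictAntiOn_div_mul_sub hb hνd).mul_antitoneOn_of_nonneg_of_pos
    ((antitoneOn_mul_rpow_add_const hγ₁.le hγ₂ γ₃).mono hpos)
    (fun x hx ↦ (div_mul_sub_pos hb hνd hx).le)
    (fun x hx ↦ by have := rpow_pos_of_pos (hpos hx) γ₂; positivity)
  have hH₀ : (fun ω : ℝ => ω * d * (γ₁ * ω ^ γ₂ + γ₃) / (ν * ω * d - b)) =
      fun ω => d * (ω / (ν * d * ω - b) * (γ₁ * ω ^ γ₂ + γ₃)) := by
    funext ω
    ring
  rw [hH₀]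
  exact fun x hx y hy hxy ↦ mul_lt_mul_of_pos_left (hprod hx hy hxy) hd
end

section
/- Fix real parameters b > 0, ν > 0, γ₁ > 0, γ₃ > 0 and an exponent γ₂ > 0. Then for every d > 0 and every ω > b/(ν·d), the derivative at ω of the function ω ↦ H₀(ω, d) = ω·d·(γ₁·ω^γ₂ + γ₃)/(ν·ω·d − b) is negative if d < H₁(ω), equal to zero if d = H₁(ω), and positive if d > H₁(ω), where H₁(ω) = b·(γ₁·(γ₂+1)·ω^γ₂ + γ₃)/(γ₁·ν·γ₂·ω^(γ₂+1)). -/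
/-!
Writing `A = γ₁ ν γ₂ ω^(γ₂+1)` and `B = b (γ₁ (γ₂+1) ω^γ₂ + γ₃)`, so that `H₁(ω) = B / A`,
the quotient rule gives `∂H₀/∂ω = d (A d - B) / (ν ω d - b)²`, which is the positive factor
`d A / (ν ω d - b)²` times `d - H₁(ω)`.
-/

lemma lt_eq_gt_of_eq_pos_mul_sub {x y D c : ℝ} (hc : 0 < c) (hD : D = c * (x - y)) :
    (x < y → D < 0) ∧ (x = y → D = 0) ∧ (y < x → 0 < D) := by
  subst hD
  refine ⟨fun h => ?_, fun h => ?_, fun h => ?_⟩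
  · exact mul_neg_of_pos_of_neg hc (sub_neg.mpr h)
  · rw [h, sub_self, mul_zero]
  · exact mul_pos hc (sub_pos.mpr h)

lemma hasDerivAt_mul_rpow_div {b ν γ₁ γ₂ γ₃ d ω : ℝ} (hω : 0 < ω) (hden : ν * ω * d - b ≠ 0) :
    HasDerivAt (fun ω : ℝ => ω * d * (γ₁ * ω ^ γ₂ + γ₃) / (ν * ω * d - b))
      (d * (γ₁ * ν * γ₂ * ω ^ (γ₂ + 1) * d - b * (γ₁ * (γ₂ + 1) * ω ^ γ₂ + γ₃))
        / (ν * ω * d - b) ^ 2) ω := by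
  have hnum : HasDerivAt (fun ω : ℝ => ω * d * (γ₁ * ω ^ γ₂ + γ₃))
      (1 * d * (γ₁ * ω ^ γ₂ + γ₃) + ω * d * (γ₁ * (γ₂ * ω ^ (γ₂ - 1)))) ω :=
    ((hasDerivAt_id ω).mul_const d).mul
      (((Real.hasDerivAt_rpow_const (Or.inl hω.ne')).const_mul γ₁).add_const γ₃)
  have hdenom : HasDerivAt (fun ω : ℝ => ν * ω * d - b) (ν * 1 * d) ω :=
    (((hasDerivAt_id ω).const_mul ν).mul_const d).sub_const b
  refine (hnum.div hdenom hden).congr_deriv ?_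
  have hsucc : ω ^ (γ₂ + 1) = ω ^ γ₂ * ω := Real.rpow_add_one hω.ne' γ₂
  have hpred : ω ^ γ₂ = ω ^ (γ₂ - 1) * ω := by
    rw [← Real.rpow_add_one hω.ne', sub_add_cancel]
  rw [hsucc, hpred]
  ring

theorem H0_deriv_sign_trichotomy_general (b ν γ₁ γ₃ γ₂ : ℝ)
    (hb : 0 < b) (hν : 0 < ν) (hγ₁ : 0 < γ₁) (hγ₂ : 0 < γ₂)
    (d : ℝ) (hd : 0 < d) (ω : ℝ) (hω : b / (ν * d) < ω) :
    (d < b * (γ₁ * (γ₂ + 1) * ω ^ γ₂ + γ₃) / (γ₁ * ν * γ₂ * ω ^ (γ₂ + 1)) →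
      deriv (fun ω : ℝ => ω * d * (γ₁ * ω ^ γ₂ + γ₃) / (ν * ω * d - b)) ω < 0) ∧
    (d = b * (γ₁ * (γ₂ + 1) * ω ^ γ₂ + γ₃) / (γ₁ * ν * γ₂ * ω ^ (γ₂ + 1)) →
      deriv (fun ω : ℝ => ω * d * (γ₁ * ω ^ γ₂ + γ₃) / (ν * ω * d - b)) ω = 0) ∧
    (b * (γ₁ * (γ₂ + 1) * ω ^ γ₂ + γ₃) / (γ₁ * ν * γ₂ * ω ^ (γ₂ + 1)) < d →
      0 < deriv (fun ω : ℝ => ω * d * (γ₁ * ω ^ γ₂ + γ₃) / (ν * ω * d - b)) ω) := by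
  have hνd : 0 < ν * d := mul_pos hν hd
  have hω₀ : 0 < ω := (div_pos hb hνd).trans hω
  have hden : 0 < ν * ω * d - b := by
    have := (div_lt_iff₀ hνd).mp hω
    linarith
  have hA : 0 < γ₁ * ν * γ₂ * ω ^ (γ₂ + 1) := by
    have := Real.rpow_pos_of_pos hω₀ (γ₂ + 1)
    positivity
  refine lt_eq_gt_of_eq_pos_mul_sub
    (c := d * (γ₁ * ν * γ₂ * ω ^ (γ₂ + 1)) / (ν * ω * d - b) ^ 2) (by positivity) ?_
  rw [(hasDerivAt_mul_rpow_div hω₀ hden.ne').deriv]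
  field_simp

/-- Stationarity characterization in Proposition 4 (case `γ₂ > 0`): the sign of
`∂H₀/∂ω` is determined by comparing `d` with `H₁(ω)`. -/
theorem H0_deriv_sign_trichotomy (b ν γ₁ γ₃ γ₂ : ℝ)
    (hb : 0 < b) (hν : 0 < ν) (hγ₁ : 0 < γ₁) (hγ₃ : 0 < γ₃) (hγ₂ : 0 < γ₂)
    (d : ℝ) (hd : 0 < d) (ω : ℝ) (hω : b / (ν * d) < ω) :
    (d < b * (γ₁ * (γ₂ + 1) * ω ^ γ₂ + γ₃) / (γ₁ * ν * γ₂ * ω ^ (γ₂ + 1)) →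
      deriv (fun ω : ℝ => ω * d * (γ₁ * ω ^ γ₂ + γ₃) / (ν * ω * d - b)) ω < 0) ∧
    (d = b * (γ₁ * (γ₂ + 1) * ω ^ γ₂ + γ₃) / (γ₁ * ν * γ₂ * ω ^ (γ₂ + 1)) →
      deriv (fun ω : ℝ => ω * d * (γ₁ * ω ^ γ₂ + γ₃) / (ν * ω * d - b)) ω = 0) ∧
    (b * (γ₁ * (γ₂ + 1) * ω ^ γ₂ + γ₃) / (γ₁ * ν * γ₂ * ω ^ (γ₂ + 1)) < d →
      0 < deriv (fun ω : ℝ => ω * d * (γ₁ * ω ^ γ₂ + γ₃) / (ν * ω * d - b)) ω) :=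
  H0_deriv_sign_trichotomy_general b ν γ₁ γ₃ γ₂ hb hν hγ₁ hγ₂ d hd ω hω
end

section
/- Fix real parameters b > 0, ν > 0, γ₁ > 0, γ₃ > 0 and an exponent γ₂ > 0. Then ν·ω·H₁(ω) − b > 0 for every ω > 0, and the composite function ω ↦ H₂(ω, H₁(ω)) = −b·ω·(γ₁·ω^γ₂ + γ₃)/(ν·ω·H₁(ω) − b)² is strictly decreasing on (0, ∞), where H₁(ω) = b·(γ₁·(γ₂+1)·ω^γ₂ + γ₃)/(γ₁·ν·γ₂·ω^(γ₂+1)) and ω^γ₂ denotes the real power. -/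
/-!
Writing `A = ω ^ γ₂`, the gap `ν ω H₁(ω) - b` collapses to `b (γ₁ + γ₃ / A) / (γ₁ γ₂)`, and then
`H₂(ω, H₁(ω)) = -((γ₁ γ₂)² / b) · ω ^ (γ₂ + 1) / (γ₁ + γ₃ ω ^ (-γ₂))`: a negative multiple of a
strictly increasing positive numerator over a positive non-increasing denominator.
-/

open Set

section StationaryCurve

variable {b ν γ₁ γ₂ γ₃ ω : ℝ}

lemma stationary_gap_eq (hν : ν ≠ 0) (hγ₁ : γ₁ ≠ 0) (hγ₂ : γ₂ ≠ 0) (hω : 0 < ω) :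
    ν * ω * (b * (γ₁ * (γ₂ + 1) * ω ^ γ₂ + γ₃) / (γ₁ * ν * γ₂ * ω ^ (γ₂ + 1))) - b =
      b / (γ₁ * γ₂) * (γ₁ + γ₃ * ω ^ (-γ₂)) := by
  have hA : ω ^ γ₂ ≠ 0 := (Real.rpow_pos_of_pos hω γ₂).ne'
  rw [Real.rpow_add hω, Real.rpow_one, Real.rpow_neg hω.le]
  field_simp
  ring

lemma gradient_on_stationary_curve_eq (hb : b ≠ 0) (hν : ν ≠ 0) (hγ₁ : γ₁ ≠ 0)
    (hγ₂ : γ₂ ≠ 0) (hω : 0 < ω) (hden : γ₁ + γ₃ * ω ^ (-γ₂) ≠ 0) :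
    -(b * ω * (γ₁ * ω ^ γ₂ + γ₃)) /
        (ν * ω * (b * (γ₁ * (γ₂ + 1) * ω ^ γ₂ + γ₃) / (γ₁ * ν * γ₂ * ω ^ (γ₂ + 1))) - b) ^ 2 =
      -((γ₁ * γ₂) ^ 2 / b) * (ω ^ (γ₂ + 1) / (γ₁ + γ₃ * ω ^ (-γ₂))) := by
  have hA : ω ^ γ₂ ≠ 0 := (Real.rpow_pos_of_pos hω γ₂).ne'
  have hsum : γ₁ * ω ^ γ₂ + γ₃ = ω ^ γ₂ * (γ₁ + γ₃ * ω ^ (-γ₂)) := by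
    rw [Real.rpow_neg hω.le]
    field_simp
  rw [stationary_gap_eq hν hγ₁ hγ₂ hω, hsum, Real.rpow_add hω, Real.rpow_one]
  field_simp

end StationaryCurve

lemma strictMonoOn_rpow_add_one_div_add_rpow_neg {γ₁ γ₂ γ₃ : ℝ} (hγ₁ : 0 < γ₁) (hγ₃ : 0 ≤ γ₃)
    (hγ₂ : 0 ≤ γ₂) :
    StrictMonoOn (fun ω : ℝ => ω ^ (γ₂ + 1) / (γ₁ + γ₃ * ω ^ (-γ₂))) (Ioi 0) := by
  intro x (hx : 0 < x) y (hy : 0 < y) hxy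
  have hnum : x ^ (γ₂ + 1) < y ^ (γ₂ + 1) := Real.rpow_lt_rpow hx.le hxy (by linarith)
  have hden : y ^ (-γ₂) ≤ x ^ (-γ₂) := Real.rpow_le_rpow_of_nonpos hx hxy.le (by linarith)
  exact div_lt_div₀ hnum (by gcongr) (by positivity) (by positivity)

/-- Substitution step in the proof of Lemma 4: along the stationary curve
`d = H₁(ω)`, one has `ν·ω·H₁(ω) − b > 0`, and the gradient
`ω ↦ H₂(ω, H₁(ω))` is strictly decreasing on `(0, ∞)`. -/
theorem H2_comp_H1_strictAntiOn (b ν γ₁ γ₃ γ₂ : ℝ)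
    (hb : 0 < b) (hν : 0 < ν) (hγ₁ : 0 < γ₁) (hγ₃ : 0 < γ₃) (hγ₂ : 0 < γ₂) :
    (∀ ω : ℝ, 0 < ω →
      0 < ν * ω * (b * (γ₁ * (γ₂ + 1) * ω ^ γ₂ + γ₃) /
        (γ₁ * ν * γ₂ * ω ^ (γ₂ + 1))) - b) ∧
    StrictAntiOn
      (fun ω : ℝ => -(b * ω * (γ₁ * ω ^ γ₂ + γ₃)) /
        (ν * ω * (b * (γ₁ * (γ₂ + 1) * ω ^ γ₂ + γ₃) /
          (γ₁ * ν * γ₂ * ω ^ (γ₂ + 1))) - b) ^ 2)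
      (Set.Ioi (0 : ℝ)) := by
  have hden (ω : ℝ) (hω : 0 < ω) : 0 < γ₁ + γ₃ * ω ^ (-γ₂) := by positivity
  refine ⟨fun ω hω => ?_, fun x hx y hy hxy => ?_⟩
  · rw [stationary_gap_eq hν.ne' hγ₁.ne' hγ₂.ne' hω]
    exact mul_pos (by positivity) (hden ω hω)
  · dsimp only
    rw [gradient_on_stationary_curve_eq hb.ne' hν.ne' hγ₁.ne' hγ₂.ne' hx (hden x hx).ne',
      gradient_on_stationary_curve_eq hb.ne' hν.ne' hγ₁.ne' hγ₂.ne' hy (hden y hy).ne']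
    have hmono := strictMonoOn_rpow_add_one_div_add_rpow_neg hγ₁ hγ₃.le hγ₂.le hx hy hxy
    exact mul_lt_mul_of_neg_left hmono (neg_neg_of_pos (by positivity))
end
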